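/- For every n ≥ 2 there exists a natural number N (depending only on n) such that for every field K with more than 3 elements, every element of SL_n(K) is a product of at most N commutators of elements of SL_n(K). In particular, SL_n(K) equals its own commutator subgroup for every field K with more than 3 elements. -/

import Mathlib

open FirstOrder

/-- The function symbols of the first-order language of groups:
multiplication, inverse, and identity. -/
inductive GroupFunc : ℕ → Type
  | mul : GroupFunc 2
  | inv : GroupFunc 1
  | one : GroupFunc 0

/-- The first-order language of groups. -/
def groupLang : FirstOrder.Language :=
  { Functions := GroupFunc, Relations := fun _ => Empty }

/-- Any group is a structure for the language of groups in the natural way. -/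
instance groupLangStructure (G : Type*) [Group G] : groupLang.Structure G where
  funMap {_} f v :=
    match f with
    | GroupFunc.mul => v 0 * v 1
    | GroupFunc.inv => (v 0)⁻¹
    | GroupFunc.one => 1
  RelMap {_} r := r.elim

/-- Two groups are elementarily equivalent in the first-order language of groups
if they satisfy exactly the same first-order sentences of the group language. -/
def GroupElemEquiv (G H : Type*) [Group G] [Group H] : Prop :=
  groupLang.ElementarilyEquivalent G H

/-- Two rings are elementarily equivalent in the first-order language of rings
if they satisfy exactly the same first-order sentences of the ring language. -/
def RingElemEquiv (R S : Type*) [Ring R] [Ring S] : Prop :=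
  letI := FirstOrder.Ring.compatibleRingOfRing R
  letI := FirstOrder.Ring.compatibleRingOfRing S
  FirstOrder.Language.ring.ElementarilyEquivalent R S

open scoped commutatorElement in
/-- `g` is a product of at most `N` commutators of elements of `G`. -/
def IsProdOfAtMostNCommutators {G : Type*} [Group G] (N : ℕ) (g : G) : Prop :=
  ∃ l : List (G × G), l.length ≤ N ∧ g = (l.map fun q => ⁅q.1, q.2⁆).prod

/-!
Over a field, two-sided Gaussian elimination brings any square matrix to diagonal form `D`
using at most `(card n)²` transvections on each side. If the determinant is `1`, then `D` is a
product of fewer than `card n` matrices `diag(t, t⁻¹)` supported on two coordinates, and each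
of these is a product of six transvections. When `|K| > 3` there is `a ≠ 0` with `a² ≠ 1`;
conjugating `E_ij(b)` by `diag(a, a⁻¹)` gives `E_ij(a² b)`, so
`⁅diag(a, a⁻¹), E_ij(b)⁆ = E_ij((a² - 1) b)` and every transvection is a single commutator.
-/

open Matrix Matrix.TransvectionStruct Matrix.Pivot Sum
open scoped commutatorElement

section Commutators

variable {G : Type*} [Group G] {N : ℕ} {g : G}

theorem IsProdOfAtMostNCommutators.mono {M : ℕ} (h : IsProdOfAtMostNCommutators N g)
    (hNM : N ≤ M) : IsProdOfAtMostNCommutators M g :=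
  let ⟨l, hl, hg⟩ := h
  ⟨l, hl.trans hNM, hg⟩

theorem isProdOfAtMostNCommutators_list_prod (l : List G) (hl : ∀ g ∈ l, g ∈ commutatorSet G) :
    IsProdOfAtMostNCommutators l.length l.prod := by
  induction l with
  | nil => exact ⟨[], le_rfl, rfl⟩
  | cons g l ih =>
    obtain ⟨x, y, rfl⟩ := hl g List.mem_cons_self
    obtain ⟨l', hl', hprod⟩ := ih fun h hh => hl h (List.mem_cons_of_mem _ hh)
    exact ⟨(x, y) :: l', by simpa using hl', by simp [hprod]⟩

theorem IsProdOfAtMostNCommutators.mem_commutator (h : IsProdOfAtMostNCommutators N g) :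
    g ∈ commutator G := by
  obtain ⟨l, -, rfl⟩ := h
  refine Subgroup.list_prod_mem _ fun x hx => ?_
  obtain ⟨q, -, rfl⟩ := List.mem_map.1 hx
  exact Subgroup.commutator_mem_commutator (Subgroup.mem_top q.1) (Subgroup.mem_top q.2)

end Commutators

theorem exists_ne_zero_sq_ne_one {K : Type*} [Field K] (hK : 3 < Cardinal.mk K) :
    ∃ a : K, a ≠ 0 ∧ a ^ 2 ≠ 1 := by
  classical
  by_contra! h
  have hsub : (Set.univ : Set K) ⊆ (({0, 1, -1} : Finset K) : Set K) := fun a _ => by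
    rcases eq_or_ne a 0 with rfl | ha
    · simp
    · rcases sq_eq_one_iff.1 (h a ha) with rfl | rfl <;> simp
  have hcard := Cardinal.mk_le_mk_of_subset hsub
  rw [Cardinal.mk_univ] at hcard
  exact hK.not_ge (hcard.trans (Cardinal.mk_coe_finset.trans_le (mod_cast Finset.card_le_three)))

theorem Finset.prod_erase_mulSingle_mul_mulSingle_inv {ι M : Type*} [Fintype ι] [DecidableEq ι]
    [DivisionCommMonoid M] {D : ι → M} (hD : ∏ i, D i = 1) (j : ι) :
    ∏ i ∈ univ.erase j, (Pi.mulSingle i (D i) * Pi.mulSingle j (D i)⁻¹) = D := by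
  funext x
  simp only [Finset.prod_apply, Pi.mul_apply, Finset.prod_mul_distrib, Finset.prod_pi_mulSingle]
  rcases eq_or_ne x j with rfl | hx
  · rw [← Finset.mul_prod_erase _ _ (Finset.mem_univ x)] at hD
    simp [Finset.prod_inv_distrib, eq_inv_of_mul_eq_one_left hD]
  · simp [hx]

namespace Matrix

section CommRing

variable {R : Type*} [CommRing R] {n p : Type*} [Fintype n] [DecidableEq n] [Fintype p]
  [DecidableEq p]

theorem transvection_mulVec (i j : n) (c : R) (v : n → R) :
    transvection i j c *ᵥ v = Function.update v i (v i + c * v j) := by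
  ext k
  rcases eq_or_ne k i with rfl | hk <;> simp [transvection, add_mulVec, single_mulVec, *]

def IsProdOfAtMostTransvections (k : ℕ) (M : Matrix n n R) : Prop :=
  ∃ L : List (TransvectionStruct n R), L.length ≤ k ∧ (L.map toMatrix).prod = M

theorem isProdOfAtMostTransvections_one (k : ℕ) :
    IsProdOfAtMostTransvections k (1 : Matrix n n R) :=
  ⟨[], Nat.zero_le k, rfl⟩

theorem isProdOfAtMostTransvections_transvection {i j : n} (hij : i ≠ j) (c : R) :
    IsProdOfAtMostTransvections 1 (transvection i j c) :=
  ⟨[⟨i, j, hij, c⟩], le_rfl, by simp [toMatrix_mk]⟩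

namespace IsProdOfAtMostTransvections

variable {k l : ℕ} {M N : Matrix n n R}

theorem mono (h : IsProdOfAtMostTransvections k M) (hkl : k ≤ l) :
    IsProdOfAtMostTransvections l M :=
  let ⟨L, hL, hM⟩ := h
  ⟨L, hL.trans hkl, hM⟩

theorem mul (hM : IsProdOfAtMostTransvections k M) (hN : IsProdOfAtMostTransvections l N) :
    IsProdOfAtMostTransvections (k + l) (M * N) := by
  obtain ⟨L, hL, rfl⟩ := hM
  obtain ⟨L', hL', rfl⟩ := hN
  exact ⟨L ++ L', by simp only [List.length_append]; omega, by simp⟩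

theorem det_eq_one (h : IsProdOfAtMostTransvections k M) : M.det = 1 := by
  obtain ⟨L, -, rfl⟩ := h
  exact det_toMatrix_prod L

theorem inv (h : IsProdOfAtMostTransvections k M) : IsProdOfAtMostTransvections k M⁻¹ := by
  obtain ⟨L, hL, rfl⟩ := h
  refine ⟨L.reverse.map TransvectionStruct.inv, by simpa using hL, ?_⟩
  rw [List.map_map]
  exact (inv_eq_left_inv (reverse_inv_prod_mul_prod L)).symm

theorem reindex (e : n ≃ p) (h : IsProdOfAtMostTransvections k M) :
    IsProdOfAtMostTransvections k (reindex e e M) := by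
  obtain ⟨L, hL, rfl⟩ := h
  refine ⟨L.map (reindexEquiv e), by simpa using hL, ?_⟩
  rw [List.map_map, toMatrix_reindexEquiv_prod]
  rfl

theorem fromBlocks_one (h : IsProdOfAtMostTransvections k M) :
    IsProdOfAtMostTransvections k (fromBlocks M 0 0 (1 : Matrix p p R)) := by
  obtain ⟨L, hL, rfl⟩ := h
  refine ⟨L.map (sumInl p), by simpa using hL, ?_⟩
  simpa using sumInl_toMatrix_prod_mul (M := 1) (L := L) (N := (1 : Matrix p p R))

end IsProdOfAtMostTransvections

theorem isProdOfAtMostTransvections_list_prod (l : List (Matrix n n R))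
    (hl : ∀ M ∈ l, IsProdOfAtMostTransvections 1 M) :
    IsProdOfAtMostTransvections l.length l.prod := by
  induction l with
  | nil => exact isProdOfAtMostTransvections_one 0
  | cons M l ih =>
    simpa [add_comm] using (hl M List.mem_cons_self).mul
      (ih fun N hN => hl N (List.mem_cons_of_mem _ hN))

theorem isProdOfAtMostTransvections_diagonal_prod {ι : Type*} {m : ℕ} (s : Finset ι)
    (f : ι → n → R) (hf : ∀ i ∈ s, IsProdOfAtMostTransvections m (diagonal (f i))) :
    IsProdOfAtMostTransvections (m * s.card) (diagonal (∏ i ∈ s, f i)) := by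
  classical
  induction s using Finset.induction_on with
  | empty => simpa using isProdOfAtMostTransvections_one 0
  | insert i s hi ih =>
    rw [Finset.prod_insert hi, Finset.card_insert_of_notMem hi, mul_add_one, add_comm]
    convert (hf i (s.mem_insert_self i)).mul (ih fun x hx => hf x (Finset.mem_insert_of_mem hx))
      using 1
    exact (diagonal_mul_diagonal _ _).symm

def DiagonalizableByTransvections (k : ℕ) (M : Matrix n n R) : Prop :=
  ∃ (A B : Matrix n n R) (D : n → R), IsProdOfAtMostTransvections k A ∧
    IsProdOfAtMostTransvections k B ∧ A * M * B = diagonal D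

theorem DiagonalizableByTransvections.mono {k l : ℕ} {M : Matrix n n R}
    (h : DiagonalizableByTransvections k M) (hkl : k ≤ l) : DiagonalizableByTransvections l M :=
  let ⟨A, B, D, hA, hB, hM⟩ := h
  ⟨A, B, D, hA.mono hkl, hB.mono hkl, hM⟩

theorem DiagonalizableByTransvections.of_reindex {k : ℕ} {M : Matrix p p R} (e : p ≃ n)
    (h : DiagonalizableByTransvections k (reindex e e M)) : DiagonalizableByTransvections k M := by
  obtain ⟨A, B, D, hA, hB, hM⟩ := h
  refine ⟨reindex e.symm e.symm A, reindex e.symm e.symm B, D ∘ e, hA.reindex _, hB.reindex _, ?_⟩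
  have := congrArg (reindexAlgEquiv R R e.symm) hM
  rw [map_mul, map_mul, coe_reindexAlgEquiv, ← reindex_symm, Equiv.symm_apply_apply,
    reindex_symm] at this
  rw [this, reindex_apply, submatrix_diagonal_equiv, Equiv.symm_symm]

end CommRing

variable {K : Type*} [Field K] {n : Type*} [Fintype n] [DecidableEq n]

theorem diagonal_mul_transvection (d : n → K) {i j : n} (hd : d j ≠ 0) (c : K) :
    diagonal d * transvection i j c = transvection i j (d i * c / d j) * diagonal d := by
  refine ext_iff_mulVec.2 fun v => funext fun k => ?_
  simp only [← mulVec_mulVec, transvection_mulVec, mulVec_diagonal]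
  rcases eq_or_ne k i with rfl | hk
  · simp only [Function.update_self]
    field_simp
  · simp [hk, mulVec_diagonal]

-- `diag(t, t⁻¹) = w(t) w(-1)` with `w(t) = E_ij(t) E_ji(-t⁻¹) E_ij(t)` (Steinberg relations).
theorem diagonal_mulSingle_mul_mulSingle_inv_eq_prod_transvections {i j : n} (hij : i ≠ j)
    {t : K} (ht : t ≠ 0) :
    diagonal (Pi.mulSingle i t * Pi.mulSingle j t⁻¹) =
      transvection i j t * transvection j i (-t⁻¹) * transvection i j t *
        transvection i j (-1) * transvection j i 1 * transvection i j (-1) := by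
  refine ext_iff_mulVec.2 fun v => funext fun k => ?_
  simp only [← mulVec_mulVec, transvection_mulVec, mulVec_diagonal, Pi.mul_apply]
  obtain ⟨hki, hkj⟩ | hk : k ≠ i ∧ k ≠ j ∨ k = i ∨ k = j := by tauto
  · simp [hki, hkj]
  rcases hk with rfl | rfl
  all_goals
    simp only [Pi.mulSingle_eq_same, Pi.mulSingle_eq_of_ne, Function.update_self,
      Function.update_of_ne, Function.update_idem, ne_eq, hij, hij.symm, not_false_eq_true,
      mul_one, one_mul, neg_mul, add_neg_cancel_comm_assoc, add_neg_cancel_comm]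
    field_simp
    ring

theorem isProdOfAtMostTransvections_diagonal_mulSingle_mul_mulSingle_inv {i j : n} (hij : i ≠ j)
    {t : K} (ht : t ≠ 0) :
    IsProdOfAtMostTransvections 6 (diagonal (Pi.mulSingle i t * Pi.mulSingle j t⁻¹ : n → K)) := by
  rw [diagonal_mulSingle_mul_mulSingle_inv_eq_prod_transvections hij ht]
  have hT := isProdOfAtMostTransvections_transvection (R := K) hij
  have hT' := isProdOfAtMostTransvections_transvection (R := K) hij.symm
  exact (hT _).mul (hT' _) |>.mul (hT _) |>.mul (hT _) |>.mul (hT' _) |>.mul (hT _)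

theorem isProdOfAtMostTransvections_diagonal {D : n → K} (hD : ∏ i, D i = 1) :
    IsProdOfAtMostTransvections (6 * Fintype.card n) (diagonal D) := by
  cases isEmpty_or_nonempty n
  · rw [Subsingleton.elim (diagonal D) 1]
    exact isProdOfAtMostTransvections_one _
  obtain ⟨j⟩ := ‹Nonempty n›
  have hD0 : ∀ i, D i ≠ 0 := fun i h => by
    simp [Finset.prod_eq_zero (Finset.mem_univ i) h] at hD
  rw [← Finset.prod_erase_mulSingle_mul_mulSingle_inv hD j]
  refine (isProdOfAtMostTransvections_diagonal_prod _ _ fun i hi =>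
    isProdOfAtMostTransvections_diagonal_mulSingle_mul_mulSingle_inv
      (Finset.ne_of_mem_erase hi) (hD0 i)).mono ?_
  gcongr
  exact Finset.card_le_univ _

namespace Pivot

variable {r : ℕ}

theorem exists_isTwoBlockDiagonal_mul_mul_of_ne_zero {M : Matrix (Fin r ⊕ Unit) (Fin r ⊕ Unit) K}
    (hM : M (inr ()) (inr ()) ≠ 0) :
    ∃ A B : Matrix (Fin r ⊕ Unit) (Fin r ⊕ Unit) K, IsProdOfAtMostTransvections r A ∧
      IsProdOfAtMostTransvections r B ∧ IsTwoBlockDiagonal (A * M * B) := by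
  refine ⟨_, _, ?_, ?_, isTwoBlockDiagonal_listTransvecCol_mul_mul_listTransvecRow M hM⟩
  · refine (isProdOfAtMostTransvections_list_prod _ fun N hN => ?_).mono
      (length_listTransvecCol M).le
    obtain ⟨i, rfl⟩ := List.mem_ofFn.1 hN
    exact isProdOfAtMostTransvections_transvection (by simp) _
  · refine (isProdOfAtMostTransvections_list_prod _ fun N hN => ?_).mono
      (length_listTransvecRow M).le
    obtain ⟨i, rfl⟩ := List.mem_ofFn.1 hN
    exact isProdOfAtMostTransvections_transvection (by simp) _

theorem exists_mul_mul_apply_inr_inr_ne_zero {M : Matrix (Fin r ⊕ Unit) (Fin r ⊕ Unit) K}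
    (hM : ¬IsTwoBlockDiagonal M) :
    ∃ A B : Matrix (Fin r ⊕ Unit) (Fin r ⊕ Unit) K, IsProdOfAtMostTransvections 1 A ∧
      IsProdOfAtMostTransvections 1 B ∧ (A * M * B) (inr ()) (inr ()) ≠ 0 := by
  have hone := isProdOfAtMostTransvections_one (n := Fin r ⊕ Unit) (R := K) 1
  by_cases h : M (inr ()) (inr ()) = 0
  swap
  · exact ⟨1, 1, hone, hone, by simpa using h⟩
  simp only [IsTwoBlockDiagonal, toBlocks₁₂, toBlocks₂₁, ← Matrix.ext_iff, not_and_or] at hM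
  push Not at hM
  rcases hM with ⟨i, ⟨⟩, hi⟩ | ⟨⟨⟩, i, hi⟩
  · refine ⟨transvection (inr ()) (inl i) 1, 1, isProdOfAtMostTransvections_transvection
      (by simp) _, hone, ?_⟩
    simpa [transvection_mul_apply_same, h] using hi
  · refine ⟨1, transvection (inl i) (inr ()) 1, hone, isProdOfAtMostTransvections_transvection
      (by simp) _, ?_⟩
    simpa [mul_transvection_apply_same, h] using hi

theorem exists_isTwoBlockDiagonal_mul_mul (M : Matrix (Fin r ⊕ Unit) (Fin r ⊕ Unit) K) :
    ∃ A B : Matrix (Fin r ⊕ Unit) (Fin r ⊕ Unit) K, IsProdOfAtMostTransvections (r + 1) A ∧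
      IsProdOfAtMostTransvections (r + 1) B ∧ IsTwoBlockDiagonal (A * M * B) := by
  by_cases hM : IsTwoBlockDiagonal M
  · exact ⟨1, 1, isProdOfAtMostTransvections_one _, isProdOfAtMostTransvections_one _,
      by simpa using hM⟩
  obtain ⟨A₁, B₁, hA₁, hB₁, h₁⟩ := exists_mul_mul_apply_inr_inr_ne_zero hM
  obtain ⟨A₂, B₂, hA₂, hB₂, h₂⟩ := exists_isTwoBlockDiagonal_mul_mul_of_ne_zero h₁
  exact ⟨A₂ * A₁, B₁ * B₂, hA₂.mul hA₁, (hB₁.mul hB₂).mono (by omega), by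
    simpa only [Matrix.mul_assoc] using h₂⟩

theorem diagonalizableByTransvections_sum_unit {k : ℕ}
    (h : ∀ N : Matrix (Fin r) (Fin r) K, DiagonalizableByTransvections k N)
    (M : Matrix (Fin r ⊕ Unit) (Fin r ⊕ Unit) K) :
    DiagonalizableByTransvections (k + (r + 1)) M := by
  obtain ⟨A₁, B₁, hA₁, hB₁, hM⟩ := exists_isTwoBlockDiagonal_mul_mul M
  set M' := A₁ * M * B₁
  obtain ⟨A₀, B₀, D₀, hA₀, hB₀, h₀⟩ := h (toBlocks₁₁ M')
  have hblock : M' = fromBlocks (toBlocks₁₁ M') 0 0 (diagonal fun _ => M' (inr ()) (inr ())) := by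
    rw [← fromBlocks_toBlocks M', hM.1, hM.2]
    rfl
  refine ⟨fromBlocks A₀ 0 0 1 * A₁, B₁ * fromBlocks B₀ 0 0 1,
    Sum.elim D₀ fun _ => M' (inr ()) (inr ()), hA₀.fromBlocks_one.mul hA₁,
    (hB₁.mul hB₀.fromBlocks_one).mono (by omega), ?_⟩
  calc fromBlocks A₀ 0 0 1 * A₁ * M * (B₁ * fromBlocks B₀ 0 0 1)
      = fromBlocks A₀ 0 0 1 * M' * fromBlocks B₀ 0 0 1 := by simp only [M', Matrix.mul_assoc]
    _ = _ := by
      rw [hblock, fromBlocks_multiply, fromBlocks_multiply]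
      simp [h₀, fromBlocks_diagonal]

end Pivot

theorem diagonalizableByTransvections_fin :
    ∀ {r : ℕ} (M : Matrix (Fin r) (Fin r) K), DiagonalizableByTransvections (r ^ 2) M
  | 0, _ => ⟨1, 1, 0, isProdOfAtMostTransvections_one _, isProdOfAtMostTransvections_one _,
      Subsingleton.elim _ _⟩
  | r + 1, M => by
    have e : Fin (r + 1) ≃ Fin r ⊕ Unit := Fintype.equivOfCardEq (by simp)
    refine (DiagonalizableByTransvections.of_reindex e
      (Pivot.diagonalizableByTransvections_sum_unit diagonalizableByTransvections_fin _)).mono ?_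
    nlinarith

theorem diagonalizableByTransvections (M : Matrix n n K) :
    DiagonalizableByTransvections (Fintype.card n ^ 2) M :=
  .of_reindex (Fintype.equivFin n) (diagonalizableByTransvections_fin _)

theorem isProdOfAtMostTransvections_of_det_eq_one {M : Matrix n n K} (hM : M.det = 1) :
    IsProdOfAtMostTransvections (2 * Fintype.card n ^ 2 + 6 * Fintype.card n) M := by
  obtain ⟨A, B, D, hA, hB, hD⟩ := diagonalizableByTransvections M
  have hdet : ∏ i, D i = 1 := by
    rw [← det_diagonal, ← hD, det_mul, det_mul, hA.det_eq_one, hB.det_eq_one, hM]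
    simp
  have hfactor : M = A⁻¹ * diagonal D * B⁻¹ := by
    rw [← hD, Matrix.mul_assoc A, nonsing_inv_mul_cancel_left _ _ (by simp [hA.det_eq_one]),
      mul_nonsing_inv_cancel_right _ _ (by simp [hB.det_eq_one])]
  rw [hfactor]
  exact ((hA.inv.mul (isProdOfAtMostTransvections_diagonal hdet)).mul hB.inv).mono (by omega)

end Matrix

namespace Matrix.SpecialLinearGroup

variable {K : Type*} [Field K] {n : Type*} [Fintype n] [DecidableEq n]

theorem diag2n_mul_transvection {i j : n} (hij : i ≠ j) {a : K} (ha : a ≠ 0) (b : K) :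
    diag2n hij a ha * transvection hij b = transvection hij (a ^ 2 * b) * diag2n hij a ha := by
  refine Subtype.ext ?_
  change diagonal _ * Matrix.transvection i j b = Matrix.transvection i j _ * diagonal _
  rw [diagonal_mul_transvection _ (by simp [hij.symm, ha])]
  congr 2
  simp only [↓reduceIte, if_neg hij.symm]
  field_simp

theorem commutatorElement_diag2n_transvection {i j : n} (hij : i ≠ j) {a : K} (ha : a ≠ 0)
    (b : K) : ⁅diag2n hij a ha, transvection hij b⁆ = transvection hij ((a ^ 2 - 1) * b) := by
  rw [commutatorElement_def, diag2n_mul_transvection, mul_inv_cancel_right, transvection_inv,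
    ← transvection_add, sub_one_mul, sub_eq_add_neg]

theorem transvection_mem_commutatorSet {a : K} (ha : a ≠ 0) (ha2 : a ^ 2 ≠ 1) {i j : n}
    (hij : i ≠ j) (c : K) : transvection hij c ∈ commutatorSet (SpecialLinearGroup n K) :=
  ⟨_, _, (commutatorElement_diag2n_transvection hij ha (c / (a ^ 2 - 1))).trans
    (by rw [mul_div_cancel₀ c (sub_ne_zero.2 ha2)])⟩

theorem isProdOfAtMostNCommutators_of_isProdOfAtMostTransvections {a : K} (ha : a ≠ 0)
    (ha2 : a ^ 2 ≠ 1) {k : ℕ} {g : SpecialLinearGroup n K}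
    (hg : IsProdOfAtMostTransvections k (g : Matrix n n K)) : IsProdOfAtMostNCommutators k g := by
  obtain ⟨L, hL, hLg⟩ := hg
  have hg : g = (L.map TransvectionStruct.toSpecialLinearGroup).prod := coeMonoidHom_injective <| by
    simp [map_list_prod, List.map_map, Function.comp_def, hLg]
  rw [hg]
  refine (isProdOfAtMostNCommutators_list_prod _ fun x hx => ?_).mono (by simpa using hL)
  obtain ⟨t, -, rfl⟩ := List.mem_map.1 hx
  exact transvection_mem_commutatorSet ha ha2 t.hij t.c

end Matrix.SpecialLinearGroup

theorem sl_boundedCommutatorWidth_general (n : ℕ) :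
    ∃ N : ℕ, ∀ (K : Type) [Field K], 3 < Cardinal.mk K →
      (∀ g : Matrix.SpecialLinearGroup (Fin n) K, IsProdOfAtMostNCommutators N g) ∧
        commutator (Matrix.SpecialLinearGroup (Fin n) K) = ⊤ := by
  refine ⟨2 * n ^ 2 + 6 * n, fun K _ hK => ?_⟩
  obtain ⟨a, ha, ha2⟩ := exists_ne_zero_sq_ne_one hK
  have hwidth (g : Matrix.SpecialLinearGroup (Fin n) K) :
      IsProdOfAtMostNCommutators (2 * n ^ 2 + 6 * n) g :=
    Matrix.SpecialLinearGroup.isProdOfAtMostNCommutators_of_isProdOfAtMostTransvections ha ha2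
      (by simpa using isProdOfAtMostTransvections_of_det_eq_one g.2)
  exact ⟨hwidth, eq_top_iff.2 fun g _ => (hwidth g).mem_commutator⟩

/-- For every `n ≥ 2` there is a natural number `N` (depending only on `n`) such that for
every field `K` with more than 3 elements, every element of `SL_n(K)` is a product of at
most `N` commutators; in particular `SL_n(K)` is its own commutator subgroup. -/
theorem sl_boundedCommutatorWidth (n : ℕ) (hn : 2 ≤ n) :
    ∃ N : ℕ, ∀ (K : Type) [Field K], 3 < Cardinal.mk K →
      (∀ g : Matrix.SpecialLinearGroup (Fin n) K, IsProdOfAtMostNCommutators N g) ∧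
        commutator (Matrix.SpecialLinearGroup (Fin n) K) = ⊤ :=
  sl_boundedCommutatorWidth_general n
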